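/- arXiv:1610.05250 — 2 statements merged into one kernel-verified Lean document; each statement's English description precedes it below -/
import Mathlib

section
/- For every odd integer n ≥ 5, the upper broadcast domination number of the cycle C_n equals n − 3: Γ_b(C_n) = n − 3. -/
open SimpleGraph Finset

/-- `S` is a dominating set of `G`: every vertex is in `S` or adjacent to a vertex of `S`. -/
def Dominates {V : Type*} (G : SimpleGraph V) (S : Finset V) : Prop :=
  ∀ v : V, v ∈ S ∨ ∃ u ∈ S, G.Adj v u

/-- `S` is a minimal dominating set: it dominates and no proper subset dominates. -/
def MinimalDominating {V : Type*} (G : SimpleGraph V) (S : Finset V) : Prop :=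
  Dominates G S ∧ ∀ S' : Finset V, S' ⊂ S → ¬ Dominates G S'

/-- The upper domination number `Γ(G)`: maximum cardinality of a minimal dominating set. -/
noncomputable def upperDomination {V : Type*} (G : SimpleGraph V) : ℕ :=
  sSup {k : ℕ | ∃ S : Finset V, MinimalDominating G S ∧ S.card = k}

/-- The domination number `γ(G)`: minimum cardinality of a dominating set. -/
noncomputable def domNumber {V : Type*} (G : SimpleGraph V) : ℕ :=
  sInf {k : ℕ | ∃ S : Finset V, Dominates G S ∧ S.card = k}

/-- The eccentricity of `v` : maximum distance to any other vertex. -/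
noncomputable def eccent {V : Type*} [Fintype V] (G : SimpleGraph V) (v : V) : ℕ :=
  Finset.univ.sup (fun u => G.dist v u)

/-- The diameter of `G` : maximum eccentricity. -/
noncomputable def gDiam {V : Type*} [Fintype V] (G : SimpleGraph V) : ℕ :=
  Finset.univ.sup (fun v => eccent G v)

/-- A broadcast on `G`: `f v ≤ e(v)` for all `v`. -/
def IsBroadcast {V : Type*} [Fintype V] (G : SimpleGraph V) (f : V → ℕ) : Prop :=
  ∀ v : V, f v ≤ _root_.eccent G v

/-- A broadcast `f` dominates `G` if every vertex hears some broadcasting vertex. -/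
def BroadcastDominates {V : Type*} (G : SimpleGraph V) (f : V → ℕ) : Prop :=
  ∀ u : V, ∃ v : V, 1 ≤ f v ∧ G.dist u v ≤ f v

/-- A minimal dominating broadcast: no broadcast `g ≤ f` with `g ≠ f` dominates `G`. -/
def MinimalDominatingBroadcast {V : Type*} [Fintype V] (G : SimpleGraph V) (f : V → ℕ) : Prop :=
  IsBroadcast G f ∧ BroadcastDominates G f ∧
    ∀ g : V → ℕ, IsBroadcast G g → g ≤ f → g ≠ f → ¬ BroadcastDominates G g

/-- The cost of a broadcast. -/
def cost {V : Type*} [Fintype V] (f : V → ℕ) : ℕ := ∑ v, f v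

/-- The upper broadcast domination number `Γ_b(G)`. -/
noncomputable def upperBroadcast {V : Type*} [Fintype V] (G : SimpleGraph V) : ℕ :=
  sSup {k : ℕ | ∃ f : V → ℕ, MinimalDominatingBroadcast G f ∧ cost f = k}

/-- The broadcast domination number `γ_b(G)`. -/
noncomputable def broadcastDomNumber {V : Type*} [Fintype V] (G : SimpleGraph V) : ℕ :=
  sInf {k : ℕ | ∃ f : V → ℕ, IsBroadcast G f ∧ BroadcastDominates G f ∧ cost f = k}

/-!
Every broadcaster `v` of a minimal dominating broadcast `f` has a private vertex `u`, which hears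
no other broadcaster, with `d(v, u) = f v`; otherwise `f v = 1` and `v` itself is private. The
geodesic intervals `[v, u]` of distinct broadcasters are disjoint, and on a cycle a broadcaster of
the second kind may also claim its successor, so `σ(f) + |V⁺| ≤ n`. This settles the case of at
least three broadcasters. With two, neither has strength `e(v) = (n - 1) / 2`, since the other's
private vertex would hear it; a single broadcaster costs at most `(n - 1) / 2`. Strength
`(n - 3) / 2` at two vertices at distance two attains `n - 3`.
-/

section Broadcast

variable {V : Type*} {G : SimpleGraph V} {f : V → ℕ} {u u' v w y : V}

/-- `u` hears no broadcaster of `f` other than `v` (and need not hear `v` either). -/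
def IsPrivate (G : SimpleGraph V) (f : V → ℕ) (v u : V) : Prop :=
  ∀ w, w ≠ v → 1 ≤ f w → f w < G.dist u w

variable [Fintype V]

def broadcasters (f : V → ℕ) : Finset V := {v | 1 ≤ f v}

@[simp]
theorem mem_broadcasters : v ∈ broadcasters f ↔ 1 ≤ f v := by
  simp [broadcasters]

theorem cost_eq_sum_broadcasters (f : V → ℕ) : cost f = ∑ v ∈ broadcasters f, f v :=
  (sum_filter_of_ne fun _ _ h => Nat.one_le_iff_ne_zero.mpr h).symm

theorem dist_le_eccent (G : SimpleGraph V) (v u : V) : G.dist v u ≤ _root_.eccent G v :=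
  le_sup (f := fun u => G.dist v u) (mem_univ u)

theorem MinimalDominatingBroadcast.exists_isPrivate (hG : G.Preconnected)
    (hf : MinimalDominatingBroadcast G f) (hv : 1 ≤ f v) :
    ∃ u, IsPrivate G f v u ∧ (G.dist v u = f v ∨ u = v ∧ f v = 1) := by
  classical
  obtain ⟨hbc, hdom, hmin⟩ := hf
  set g := Function.update f v (f v - 1)
  have hg_le : g ≤ f := fun w => by
    rcases eq_or_ne w v with rfl | hwv <;> simp [g, Function.update_of_ne, *]
  have hg_ne : g ≠ f := fun h => by
    have := congrFun h v
    simp only [g, Function.update_self] at this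
    omega
  obtain ⟨u, hu⟩ : ∃ u, ∀ w, 1 ≤ g w → g w < G.dist u w := by
    simpa [BroadcastDominates] using hmin g (fun w => (hg_le w).trans (hbc w)) hg_le hg_ne
  have hpriv : IsPrivate G f v u := fun w hwv hw => by
    simpa [g, hwv] using hu w (by simpa [g, hwv])
  refine ⟨u, hpriv, ?_⟩
  obtain ⟨w, hw, huw⟩ := hdom u
  obtain rfl : w = v := by_contra fun hwv => (hpriv w hwv hw).not_ge huw
  have hgw : 1 ≤ f w - 1 → f w - 1 < G.dist u w := by simpa [g] using hu w
  rw [G.dist_comm] at huw hgw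
  rcases (G.dist w u).eq_zero_or_pos with h0 | hpos
  · exact Or.inr ⟨((hG w u).dist_eq_zero_iff.mp h0).symm, by omega⟩
  · exact Or.inl (by omega)

theorem MinimalDominatingBroadcast.lt_eccent (hG : G.Preconnected)
    (hf : MinimalDominatingBroadcast G f) (hv : 1 ≤ f v) (hw : 1 ≤ f w) (hwv : w ≠ v) :
    f w < _root_.eccent G w := by
  obtain ⟨u, hu, -⟩ := hf.exists_isPrivate hG hv
  exact (hu w hwv hw).trans_le (G.dist_comm ▸ dist_le_eccent G w u)

/-- The vertices on shortest `a`–`b` paths, when `a` and `b` are connected. -/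
noncomputable def SimpleGraph.geodesicInterval (G : SimpleGraph V) (a b : V) : Finset V :=
  {x | G.dist a x + G.dist x b ≤ G.dist a b}

theorem SimpleGraph.Reachable.dist_add_one_le_card_geodesicInterval {a b : V}
    (h : G.Reachable a b) : G.dist a b + 1 ≤ #(G.geodesicInterval a b) := by
  classical
  obtain ⟨p, hp, hlen⟩ := h.exists_path_of_dist
  calc G.dist a b + 1 = #p.support.toFinset := by
        rw [List.toFinset_card_of_nodup hp.support_nodup, Walk.length_support, hlen]
    _ ≤ #(G.geodesicInterval a b) := card_le_card fun x hx => by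
        rw [List.mem_toFinset] at hx
        have hsplit := congrArg Walk.length (p.take_spec hx)
        rw [Walk.length_append] at hsplit
        simp only [geodesicInterval, mem_filter, mem_univ, true_and]
        have := dist_le (p.takeUntil x hx)
        have := dist_le (p.dropUntil x hx)
        omega

theorem IsPrivate.disjoint_geodesicInterval (hG : G.Preconnected) (hvw : v ≠ w)
    (hv : 1 ≤ f v) (hw : 1 ≤ f w) (hu : IsPrivate G f v u) (hu' : IsPrivate G f w u')
    (hvu : G.dist v u ≤ f v) (hwu' : G.dist w u' ≤ f w) :
    Disjoint (G.geodesicInterval v u) (G.geodesicInterval w u') := by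
  rw [Finset.disjoint_left]
  intro x hx hx'
  simp only [geodesicInterval, mem_filter, mem_univ, true_and] at hx hx'
  -- through `x`, `d(u, w) + d(u', v) ≤ d(v, u) + d(w, u') ≤ f v + f w`
  have h₁ := hu w hvw.symm hw
  have h₂ := hu' v hvw hv
  have t₁ := (hG u x).dist_triangle_left w
  have t₂ := (hG u' x).dist_triangle_left v
  rw [G.dist_comm (u := u) (v := x), G.dist_comm (u := x) (v := w)] at t₁
  rw [G.dist_comm (u := u') (v := x), G.dist_comm (u := x) (v := v)] at t₂
  omega

theorem IsPrivate.notMem_geodesicInterval_of_adj (hG : G.Preconnected) (hvw : v ≠ w)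
    (hv : 1 ≤ f v) (hw : 1 ≤ f w) (hself : IsPrivate G f v v) (hu' : IsPrivate G f w u')
    (hwu' : G.dist w u' ≤ f w) (hy : G.Adj v y) : y ∉ G.geodesicInterval w u' := by
  intro hx
  simp only [geodesicInterval, mem_filter, mem_univ, true_and] at hx
  have h₁ := hself w hvw.symm hw
  have t := (hG v y).dist_triangle_left w
  rw [dist_eq_one_iff_adj.mpr hy, G.dist_comm (u := y)] at t
  -- `w` does not reach `v`, so `y` must be the endpoint `u'`, which then hears `v`
  obtain rfl : y = u' := ((hG y u').dist_eq_zero_iff).mp (by omega)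
  have := hu' v hvw hv
  rw [G.dist_comm, dist_eq_one_iff_adj.mpr hy] at this
  omega

theorem MinimalDominatingBroadcast.cost_add_card_broadcasters_le [DecidableEq V]
    (hG : G.Preconnected) {s : V → V} (hs : s.Injective) (hadj : ∀ v, G.Adj v (s v))
    (hf : MinimalDominatingBroadcast G f) :
    cost f + #(broadcasters f) ≤ Fintype.card V := by
  have hpriv : ∀ v, ∃ u, 1 ≤ f v →
      IsPrivate G f v u ∧ (G.dist v u = f v ∨ u = v ∧ f v = 1) := fun v => by
    by_cases hv : 1 ≤ f v
    · obtain ⟨u, hu⟩ := hf.exists_isPrivate hG hv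
      exact ⟨u, fun _ => hu⟩
    · exact ⟨v, fun h => absurd h hv⟩
  choose u hu using hpriv
  have hdist (v) (hv : 1 ≤ f v) : G.dist v (u v) ≤ f v := by
    rcases (hu v hv).2 with h | ⟨h, -⟩
    · exact h.le
    · simp [h]
  -- a broadcaster that is its own chosen private vertex also claims `s v`
  let P : V → Finset V := fun v =>
    G.geodesicInterval v (u v) ∪ if u v = v then {s v} else ∅
  have hcard (v) (hv : 1 ≤ f v) : f v + 1 ≤ #(P v) := by
    rcases (hu v hv).2 with h | ⟨h, h1⟩
    · rw [← h]
      exact ((hG v (u v)).dist_add_one_le_card_geodesicInterval).trans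
        (card_le_card subset_union_left)
    · rw [h1]
      refine one_lt_card.mpr ⟨v, mem_union_left _ ?_, s v, mem_union_right _ (by simp [h]),
        (G.ne_of_adj (hadj v))⟩
      simp [SimpleGraph.geodesicInterval, h]
  have hdisj : (broadcasters f : Set V).PairwiseDisjoint P := by
    intro v hv w hw hvw
    rw [mem_coe, mem_broadcasters] at hv hw
    obtain ⟨hpv, -⟩ := hu v hv
    obtain ⟨hpw, -⟩ := hu w hw
    have hdv := hdist v hv
    have hdw := hdist w hw
    simp only [P, disjoint_union_left, disjoint_union_right]
    refine ⟨⟨hpv.disjoint_geodesicInterval hG hvw hv hw hpw hdv hdw, ?_⟩, ?_, ?_⟩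
    · split_ifs with h
      · rw [h] at hpv
        exact disjoint_singleton_left.mpr
          (hpv.notMem_geodesicInterval_of_adj hG hvw hv hw hpw hdw (hadj v))
      · exact disjoint_empty_left _
    · split_ifs with h
      · rw [h] at hpw
        exact disjoint_singleton_right.mpr
          (hpw.notMem_geodesicInterval_of_adj hG hvw.symm hw hv hpv hdv (hadj w))
      · exact disjoint_empty_right _
    · split_ifs <;> simp [hs.ne hvw]
  calc cost f + #(broadcasters f) = ∑ v ∈ broadcasters f, (f v + 1) := by
        rw [cost_eq_sum_broadcasters, sum_add_distrib, card_eq_sum_ones]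
    _ ≤ ∑ v ∈ broadcasters f, #(P v) :=
        sum_le_sum fun v hv => hcard v (mem_broadcasters.mp hv)
    _ = #((broadcasters f).biUnion P) := (card_biUnion hdisj).symm
    _ ≤ Fintype.card V := card_le_univ _

end Broadcast

def Fin.circularDist {n : ℕ} (a b : Fin n) : ℕ := min (Nat.dist a b) (n - Nat.dist a b)

theorem Fin.val_sub_eq_ite {n : ℕ} (a b : Fin n) :
    ((a - b : Fin n) : ℕ) = if b ≤ a then (a : ℕ) - b else n + a - b := by
  split_ifs with h
  · exact Fin.sub_val_of_le h
  · exact Fin.coe_sub_iff_lt.mpr (not_le.mp h)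

section cycleGraph

variable {n : ℕ}

theorem cycleGraph_adj_iff_val {u v : Fin n} :
    (cycleGraph n).Adj u v ↔ (u : ℕ) ≠ v ∧ (Nat.dist u v = 1 ∨ Nat.dist u v + 1 = n) := by
  rw [cycleGraph_adj', Fin.val_sub_eq_ite, Fin.val_sub_eq_ite, Nat.dist]
  simp only [Fin.le_def]
  have := u.isLt
  have := v.isLt
  split_ifs <;> omega

theorem cycleGraph_adj_finRotate (hn : 2 ≤ n) (v : Fin n) :
    (cycleGraph n).Adj v (finRotate n v) := by
  obtain ⟨m, rfl⟩ : ∃ m, n = m + 1 := ⟨n - 1, by omega⟩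
  rw [cycleGraph_adj_iff_val, coe_finRotate, Nat.dist]
  simp only [Fin.ext_iff, Fin.val_last]
  have := v.isLt
  split_ifs <;> omega

theorem cycleGraph_dist_le_of_val_add_eq {a b : Fin n} {m : ℕ} (h : (a : ℕ) + m = b) :
    (cycleGraph n).dist a b ≤ m := by
  induction m generalizing b with
  | zero => simp [Fin.ext (h.symm.trans (add_zero _))]
  | succ m ih =>
    let c : Fin n := ⟨a + m, by omega⟩
    have hcb : (cycleGraph n).Adj c b :=
      cycleGraph_adj_iff_val.mpr (by simp [c, Nat.dist]; omega)
    calc (cycleGraph n).dist a b ≤ (cycleGraph n).dist a c + (cycleGraph n).dist c b :=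
          (cycleGraph_preconnected a c).dist_triangle_left b
      _ ≤ m + 1 := by rw [dist_eq_one_iff_adj.mpr hcb]; exact Nat.add_le_add_right (ih rfl) 1

theorem cycleGraph_dist_le_circularDist (a b : Fin n) :
    (cycleGraph n).dist a b ≤ a.circularDist b := by
  wlog hab : (a : ℕ) ≤ b generalizing a b
  · rw [dist_comm, Fin.circularDist, Nat.dist_comm]
    exact this b a (by omega)
  rw [Fin.circularDist, Nat.dist_eq_sub_of_le hab]
  refine le_min (cycleGraph_dist_le_of_val_add_eq (by omega)) ?_
  rcases hab.eq_or_lt with hab | hab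
  · simp [Fin.ext hab]
  -- otherwise go from `a` down to `0`, across to `n - 1` and down to `b`
  let z : Fin n := ⟨0, by omega⟩
  let l : Fin n := ⟨n - 1, by omega⟩
  have hzl : (cycleGraph n).Adj z l :=
    cycleGraph_adj_iff_val.mpr (by simp [z, l, Nat.dist]; omega)
  have hza : (cycleGraph n).dist z a ≤ a := cycleGraph_dist_le_of_val_add_eq (by simp [z])
  have hbl : (cycleGraph n).dist b l ≤ n - 1 - b :=
    cycleGraph_dist_le_of_val_add_eq (by simp [l]; omega)
  calc (cycleGraph n).dist a b
      ≤ (cycleGraph n).dist a z + ((cycleGraph n).dist z l + (cycleGraph n).dist l b) :=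
        ((cycleGraph_preconnected a z).dist_triangle_left b).trans
          (Nat.add_le_add_left ((cycleGraph_preconnected z l).dist_triangle_left b) _)
    _ ≤ n - (b - a) := by
        rw [dist_comm, dist_eq_one_iff_adj.mpr hzl, dist_comm (u := l)]
        omega

theorem Fin.circularDist_le_length {a b : Fin n} (p : (cycleGraph n).Walk a b) :
    a.circularDist b ≤ p.length := by
  induction p with
  | nil => simp [Fin.circularDist]
  | cons h p ih =>
    rw [cycleGraph_adj_iff_val] at h
    simp only [Fin.circularDist, Nat.dist, Walk.length_cons] at ih h ⊢
    omega

theorem cycleGraph_dist (a b : Fin n) : (cycleGraph n).dist a b = a.circularDist b := by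
  refine (cycleGraph_dist_le_circularDist a b).antisymm ?_
  obtain ⟨p, hp⟩ := (cycleGraph_preconnected a b).exists_walk_length_eq_dist
  exact hp ▸ Fin.circularDist_le_length p

theorem eccent_cycleGraph (v : Fin n) : _root_.eccent (cycleGraph n) v = n / 2 := by
  have := v.isLt
  refine le_antisymm (Finset.sup_le fun u _ => ?_) ?_
  · rw [cycleGraph_dist, Fin.circularDist, Nat.dist]
    omega
  · obtain ⟨u, hu⟩ : ∃ u : Fin n, (u : ℕ) = v + n / 2 ∨ (u : ℕ) + n = v + n / 2 := by
      rcases lt_or_ge (v + n / 2) n with h | h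
      exacts [⟨⟨_, h⟩, Or.inl rfl⟩, ⟨⟨v + n / 2 - n, by omega⟩, Or.inr (by simp; omega)⟩]
    refine le_trans ?_ (dist_le_eccent _ v u)
    rw [cycleGraph_dist, Fin.circularDist, Nat.dist]
    omega

end cycleGraph

section oddCycle

variable {k : ℕ}

theorem MinimalDominatingBroadcast.cost_le_of_cycleGraph_odd (hk : 2 ≤ k)
    {f : Fin (2 * k + 1) → ℕ} (hf : MinimalDominatingBroadcast (cycleGraph (2 * k + 1)) f) :
    cost f ≤ 2 * k - 2 := by
  have hecc (v : Fin (2 * k + 1)) : _root_.eccent (cycleGraph (2 * k + 1)) v = k := by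
    rw [eccent_cycleGraph]; omega
  have hbound := hf.cost_add_card_broadcasters_le cycleGraph_preconnected
    (finRotate _).injective (cycleGraph_adj_finRotate (by omega))
  rw [Fintype.card_fin] at hbound
  rw [cost_eq_sum_broadcasters] at hbound ⊢
  rcases lt_or_ge #(broadcasters f) 2 with h | h
  · calc ∑ v ∈ broadcasters f, f v ≤ #(broadcasters f) • k :=
          sum_le_card_nsmul _ _ _ fun v _ => (hf.1 v).trans (hecc v).le
      _ ≤ 1 * k := by rw [smul_eq_mul]; gcongr; omega
      _ ≤ 2 * k - 2 := by omega
  rcases h.eq_or_lt with h | h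
  · -- with exactly two broadcasters, neither can reach the whole cycle
    calc ∑ v ∈ broadcasters f, f v ≤ #(broadcasters f) • (k - 1) :=
          sum_le_card_nsmul _ _ _ fun v hv => by
            obtain ⟨w, hw, hwv⟩ := exists_mem_ne (s := broadcasters f) (by omega) v
            rw [mem_broadcasters] at hv hw
            have := hf.lt_eccent cycleGraph_preconnected hw hv hwv.symm
            rw [hecc] at this
            omega
      _ = 2 * k - 2 := by rw [← h, smul_eq_mul]; omega
  · omega

theorem exists_minimalDominatingBroadcast_cycleGraph_odd (hk : 2 ≤ k) :
    ∃ f : Fin (2 * k + 1) → ℕ,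
      MinimalDominatingBroadcast (cycleGraph (2 * k + 1)) f ∧ cost f = 2 * k - 2 := by
  obtain ⟨a, ha⟩ : ∃ a : Fin (2 * k + 1), (a : ℕ) = 0 := ⟨⟨0, by omega⟩, rfl⟩
  obtain ⟨b, hb⟩ : ∃ b : Fin (2 * k + 1), (b : ℕ) = 2 := ⟨⟨2, by omega⟩, rfl⟩
  have hab : a ≠ b := by simp [Fin.ext_iff, ha, hb]
  let f : Fin (2 * k + 1) → ℕ := fun v => if v ∈ ({a, b} : Finset _) then k - 1 else 0
  have hfa : f a = k - 1 := by simp [f]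
  have hfb : f b = k - 1 := by simp [f]
  have hf0 (v) (hv : v ∉ ({a, b} : Finset _)) : f v = 0 := if_neg hv
  refine ⟨f, ⟨fun v => ?_, fun u => ?_, fun g _ hgf hne hg => ?_⟩, ?_⟩
  · rw [eccent_cycleGraph]
    simp only [f]
    split_ifs <;> omega
  · by_cases hu : (cycleGraph _).dist u a ≤ k - 1
    · exact ⟨a, by omega, hfa ▸ hu⟩
    · refine ⟨b, by omega, ?_⟩
      have := u.isLt
      simp only [cycleGraph_dist, Fin.circularDist, Nat.dist, ha, hb, hfb] at hu ⊢
      omega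
  · have hsupp (w) (hw : 1 ≤ g w) : w = a ∨ w = b := by
      by_contra h
      have : g w ≤ f w := hgf w
      rw [hf0 w (by simpa using h)] at this
      omega
    have hlow : g a < k - 1 ∨ g b < k - 1 := by
      by_contra! h
      refine hne (funext fun w => ?_)
      by_cases hw : w ∈ ({a, b} : Finset _)
      · simp only [mem_insert, mem_singleton] at hw
        rcases hw with rfl | rfl
        · exact (hgf w).antisymm (hfa ▸ h.1)
        · exact (hgf w).antisymm (hfb ▸ h.2)
      · have : g w ≤ f w := hgf w
        rw [hf0 w hw] at this ⊢
        omega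
    have hga : g a ≤ k - 1 := hfa ▸ hgf a
    have hgb : g b ≤ k - 1 := hfb ▸ hgf b
    -- lowering the strength at `a` (resp. `b`) leaves the vertex `k + 2` (resp. `k + 1`) unheard
    rcases hlow with h | h
    · obtain ⟨w, hw, hxw⟩ := hg ⟨k + 2, by omega⟩
      rcases hsupp w hw with rfl | rfl <;>
        simp [cycleGraph_dist, Fin.circularDist, Nat.dist, ha, hb] at hxw <;> omega
    · obtain ⟨w, hw, hxw⟩ := hg ⟨k + 1, by omega⟩
      rcases hsupp w hw with rfl | rfl <;>
        simp [cycleGraph_dist, Fin.circularDist, Nat.dist, ha, hb] at hxw <;> omega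
  · rw [cost, sum_ite_mem, univ_inter, sum_pair hab]
    omega

end oddCycle

/-- For every odd `n ≥ 5`, `Γ_b(C_n) = n - 3`. -/
theorem upperBroadcast_cycle_odd (n : ℕ) (hn : 5 ≤ n) (hodd : Odd n) :
    upperBroadcast (cycleGraph n) = n - 3 := by
  obtain ⟨k, rfl⟩ := hodd
  have hk : 2 ≤ k := by omega
  obtain ⟨f, hf, hcost⟩ := exists_minimalDominatingBroadcast_cycleGraph_odd hk
  refine IsGreatest.csSup_eq ⟨⟨f, hf, by omega⟩, ?_⟩
  rintro _ ⟨g, hg, rfl⟩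
  have := hg.cost_le_of_cycleGraph_odd hk
  omega
end

section
/- For all integers m, n with 3 ≤ m ≤ n, the toroidal grid C_m □ C_n is not diametrical; in fact diam(C_m □ C_n) < Γ_b(C_m □ C_n). -/
open SimpleGraph Finset

/-!
Sending power `1` from every vertex of a minimal dominating set is a minimal dominating broadcast,
and a maximal independent set is a minimal dominating set, so every independent set `I` of a
connected nontrivial graph has `#I ≤ Γ_b`. In `C_m □ C_n` distances add over the two factors,
so `diam ≤ m / 2 + n / 2`. Colour each cycle `0, 1, 0, 1, …` with `2` on its last vertex: the
pairs `(a, b)` of equal colour are independent, and there are at least `n` of them, one more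
when `m ≥ 4` because colour `0` then occurs twice on `C_m`. For `3 ≤ m ≤ n` this beats the
diameter.
-/

namespace SimpleGraph

variable {V W : Type*} {G : SimpleGraph V} {H : SimpleGraph W}

lemma Connected.dist_le_one_iff (hG : G.Connected) {u v : V} :
    G.dist u v ≤ 1 ↔ u = v ∨ G.Adj u v := by
  rw [Nat.le_one_iff_eq_zero_or_eq_one, hG.dist_eq_zero_iff, dist_eq_one_iff_adj]

lemma dist_boxProd (hG : G.Preconnected) (hH : H.Preconnected) (x y : V × W) :
    (G □ H).dist x y = G.dist x.1 y.1 + H.dist x.2 y.2 := by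
  rw [dist, edist_boxProd, ENat.toNat_add (edist_ne_top_iff_reachable.mpr (hG _ _))
    (edist_ne_top_iff_reachable.mpr (hH _ _)), dist, dist]

end SimpleGraph

section Broadcast

variable {V : Type*} {G : SimpleGraph V}

lemma broadcastDominates_indicator_iff (hG : G.Connected) (S : Finset V) :
    BroadcastDominates G ((S : Set V).indicator 1) ↔ Dominates G S := by
  refine forall_congr' fun u => ⟨?_, ?_⟩
  · rintro ⟨v, hv1, hdist⟩
    have hv : v ∈ S := by
      by_contra h
      simp [h] at hv1
    rw [Set.indicator_of_mem (mem_coe.2 hv), Pi.one_apply, hG.dist_le_one_iff] at hdist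
    rcases hdist with rfl | hadj
    exacts [Or.inl hv, Or.inr ⟨v, hv, hadj⟩]
  · rintro (hu | ⟨v, hv, hadj⟩)
    · exact ⟨u, by simp [hu], by simp⟩
    · exact ⟨v, by simp [hv], by simp [hv, dist_eq_one_iff_adj.2 hadj]⟩

lemma eq_indicator_of_le_indicator {g : V → ℕ} {S : Finset V}
    (hg : g ≤ (S : Set V).indicator 1) :
    g = ((S.filter (g · ≠ 0) : Finset V) : Set V).indicator 1 := by
  funext v
  have hv := hg v
  by_cases hvS : v ∈ S
  · have hv1 : g v ≤ 1 := by simpa [hvS] using hv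
    by_cases hv0 : g v = 0 <;> simp [hvS, hv0]
    omega
  · have hv0 : g v = 0 := by simpa [hvS] using hv
    simp [hvS, hv0]

lemma minimalDominating_of_maximal_isIndepSet {S : Finset V}
    (hS : Maximal (fun T : Finset V => G.IsIndepSet T) S) : MinimalDominating G S := by
  classical
  have hdom : Dominates G S := by
    intro v
    by_contra! h
    have hins : G.IsIndepSet (insert v S : Finset V) := by
      rw [coe_insert]
      exact hS.prop.insert fun u hu _ => ⟨h.2 u hu, fun hadj => h.2 u hu hadj.symm⟩
    exact h.1 (hS.2 hins (subset_insert v S) (mem_insert_self v S))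
  refine ⟨hdom, fun S' hS' hdom' => ?_⟩
  obtain ⟨x, hxS, hxS'⟩ := exists_of_ssubset hS'
  obtain hx | ⟨u, hu, hadj⟩ := hdom' x
  · exact hxS' hx
  · exact hS.prop hxS (hS'.subset hu) hadj.ne hadj

variable [Fintype V]

lemma gDiam_le {k : ℕ} (h : ∀ u v, G.dist u v ≤ k) : gDiam G ≤ k :=
  Finset.sup_le fun v _ => Finset.sup_le fun u _ => h v u

lemma one_le_eccent_of_connected [Nontrivial V] (hG : G.Connected) (v : V) :
    1 ≤ _root_.eccent G v := by
  obtain ⟨w, hw⟩ := exists_ne v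
  have hpos : G.dist v w ≠ 0 := dist_ne_zero_iff_ne_and_reachable.mpr ⟨hw.symm, hG v w⟩
  exact (Nat.one_le_iff_ne_zero.mpr hpos).trans (Finset.le_sup (f := G.dist v) (mem_univ w))

lemma le_upperBroadcast {f : V → ℕ} (hf : MinimalDominatingBroadcast G f) :
    cost f ≤ upperBroadcast G :=
  le_csSup ⟨∑ v, _root_.eccent G v, by
    rintro _ ⟨g, hg, rfl⟩
    exact sum_le_sum fun v _ => hg.1 v⟩ ⟨f, hf, rfl⟩

lemma cost_indicator_one (S : Finset V) : cost ((S : Set V).indicator 1) = #S := by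
  classical
  simp [cost, Set.indicator_apply]

lemma MinimalDominating.minimalDominatingBroadcast_indicator [Nontrivial V] (hG : G.Connected)
    {S : Finset V} (hS : MinimalDominating G S) :
    MinimalDominatingBroadcast G ((S : Set V).indicator 1) := by
  refine ⟨fun v => ?_, (broadcastDominates_indicator_iff hG S).2 hS.1,
    fun g _ hle hne hdom => ?_⟩
  · refine le_trans ?_ (one_le_eccent_of_connected hG v)
    by_cases hv : v ∈ S <;> simp [hv]
  · have hg := eq_indicator_of_le_indicator hle
    have hsub : S.filter (g · ≠ 0) ⊂ S :=
      (filter_subset _ _).ssubset_of_ne fun h => hne (by rw [hg, h])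
    exact hS.2 _ hsub ((broadcastDominates_indicator_iff hG _).1 (hg ▸ hdom))

lemma MinimalDominating.card_le_upperBroadcast [Nontrivial V] (hG : G.Connected) {S : Finset V}
    (hS : MinimalDominating G S) : #S ≤ upperBroadcast G :=
  cost_indicator_one S ▸ le_upperBroadcast (hS.minimalDominatingBroadcast_indicator hG)

lemma SimpleGraph.IsIndepSet.card_le_upperBroadcast [Nontrivial V] (hG : G.Connected)
    {I : Finset V} (hI : G.IsIndepSet I) : #I ≤ upperBroadcast G := by
  obtain ⟨S, hIS, hS⟩ := Finite.exists_le_maximal (p := fun T : Finset V => G.IsIndepSet T) hI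
  exact (card_le_card hIS).trans
    ((minimalDominating_of_maximal_isIndepSet hS).card_le_upperBroadcast hG)

end Broadcast

lemma SimpleGraph.isIndepSet_boxProd_setOf_coloring_eq {α β κ : Type*} {G : SimpleGraph α}
    {H : SimpleGraph β} (p : G.Coloring κ) (q : H.Coloring κ) :
    (G □ H).IsIndepSet {x | p x.1 = q x.2} := by
  rintro ⟨a, b⟩ hab ⟨a', b'⟩ ha'b' - hadj
  rcases boxProd_adj.1 hadj with ⟨hG, rfl⟩ | ⟨hH, rfl⟩
  · exact p.valid hG (hab.trans ha'b'.symm)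
  · exact q.valid hH (hab.symm.trans ha'b')

section FiberCount

variable {α β κ : Type*} [Fintype α] [Fintype β] [DecidableEq κ] {f : α → κ} {g : β → κ}

lemma card_filter_comp_eq (f : α → κ) (g : β → κ) :
    #{x : α × β | f x.1 = g x.2} = ∑ b, #{a | f a = g b} := by
  rw [card_filter, Fintype.sum_prod_type_right]
  simp only [card_filter]

lemma card_le_card_filter_comp_eq (hf : Function.Surjective f) :
    Fintype.card β ≤ #{x : α × β | f x.1 = g x.2} := by
  rw [card_filter_comp_eq, Fintype.card_eq_sum_ones]
  exact sum_le_sum fun b _ =>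
    card_pos.2 ⟨_, mem_filter.2 ⟨mem_univ _, Function.surjInv_eq hf (g b)⟩⟩

lemma card_lt_card_filter_comp_eq (hf : Function.Surjective f) (hf' : ¬ Function.Injective f)
    (hg : Function.Surjective g) : Fintype.card β < #{x : α × β | f x.1 = g x.2} := by
  classical
  obtain ⟨a, a', haa', hne⟩ := Function.not_injective_iff.1 hf'
  obtain ⟨b₀, hb₀⟩ := hg (f a)
  rw [card_filter_comp_eq, Fintype.card_eq_sum_ones]
  refine sum_lt_sum
    (fun b _ => card_pos.2 ⟨_, mem_filter.2 ⟨mem_univ _, Function.surjInv_eq hf (g b)⟩⟩)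
    ⟨b₀, mem_univ _, ?_⟩
  have hpair : {a, a'} ⊆ ({a | f a = g b₀} : Finset α) := by
    simp [insert_subset_iff, hb₀, haa']
  exact (card_pair hne).symm.trans_le (card_le_card hpair)

end FiberCount

lemma Fin.val_sub_add_val_sub_le {n : ℕ} (a b : Fin n) : (a - b).val + (b - a).val ≤ n := by
  rcases lt_trichotomy a b with h | rfl | h
  · rw [Fin.coe_sub_iff_lt.2 h, Fin.sub_val_of_le h.le]
    omega
  · simp [Fin.sub_val_of_le]
  · rw [Fin.coe_sub_iff_lt.2 h, Fin.sub_val_of_le h.le]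
    omega

namespace SimpleGraph

lemma cycleGraph_dist_add_one_le {n : ℕ} (x : Fin (n + 1)) :
    (cycleGraph (n + 1)).dist x (x + 1) ≤ 1 := by
  cases n with
  | zero => simp
  | succ n =>
    exact (dist_eq_one_iff_adj.2 (cycleGraph_adj.2 (Or.inr (add_sub_cancel_left x 1)))).le

open Fin.NatCast in
lemma cycleGraph_dist_le_val_sub {n : ℕ} (u v : Fin (n + 1)) :
    (cycleGraph (n + 1)).dist u v ≤ (v - u).val := by
  suffices h : ∀ k : ℕ, (cycleGraph (n + 1)).dist u (u + k) ≤ k by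
    simpa using h (v - u).val
  intro k
  induction k with
  | zero => simp
  | succ k ih =>
    calc (cycleGraph (n + 1)).dist u (u + (k + 1 : ℕ))
        ≤ (cycleGraph (n + 1)).dist u (u + k) +
            (cycleGraph (n + 1)).dist (u + k) (u + k + 1) := by
          rw [Nat.cast_succ, ← add_assoc]
          exact cycleGraph_connected.dist_triangle
      _ ≤ k + 1 := add_le_add ih (cycleGraph_dist_add_one_le _)

lemma cycleGraph_dist_le_half {n : ℕ} (u v : Fin n) : (cycleGraph n).dist u v ≤ n / 2 := by
  cases n with
  | zero => exact u.elim0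
  | succ n =>
    have h₁ := cycleGraph_dist_le_val_sub u v
    have h₂ := cycleGraph_dist_le_val_sub v u
    rw [dist_comm] at h₂
    have := Fin.val_sub_add_val_sub_le u v
    omega

lemma cycleGraph_adj_val {n : ℕ} {u v : Fin n} (h : (cycleGraph n).Adj u v) :
    u.val + 1 = v.val ∨ v.val + 1 = u.val ∨ (u.val + 1 = n ∧ v.val = 0) ∨
      (v.val + 1 = n ∧ u.val = 0) := by
  rw [cycleGraph_adj'] at h
  have := u.isLt
  have := v.isLt
  rcases lt_trichotomy u v with huv | rfl | huv
  · rw [Fin.coe_sub_iff_lt.2 huv, Fin.sub_val_of_le huv.le] at h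
    omega
  · simp [Fin.sub_val_of_le] at h
  · rw [Fin.coe_sub_iff_lt.2 huv, Fin.sub_val_of_le huv.le] at h
    omega

def cycleGraph.threeColoring (n : ℕ) : (cycleGraph n).Coloring (Fin 3) :=
  Coloring.mk (fun j => ⟨if j.val + 1 = n then 2 else j.val % 2, by split <;> omega⟩)
    fun h => by
      have := cycleGraph_adj_val h
      have := Fin.val_ne_of_ne h.ne
      simp only [ne_eq, Fin.ext_iff]
      split_ifs <;> omega

lemma cycleGraph.val_threeColoring {n : ℕ} (j : Fin n) :
    (cycleGraph.threeColoring n j).val = if j.val + 1 = n then 2 else j.val % 2 :=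
  rfl

lemma cycleGraph.threeColoring_surjective {n : ℕ} (hn : 3 ≤ n) :
    Function.Surjective (cycleGraph.threeColoring n) := fun k => by
  have := k.isLt
  refine ⟨⟨if k.val = 2 then n - 1 else k.val, by split_ifs <;> omega⟩, Fin.ext ?_⟩
  simp only [cycleGraph.val_threeColoring]
  split_ifs <;> omega

lemma cycleGraph.threeColoring_not_injective {n : ℕ} (hn : 4 ≤ n) :
    ¬ Function.Injective (cycleGraph.threeColoring n) := fun h => by
  have h02 := @h ⟨0, by omega⟩ ⟨2, by omega⟩
    (by ext; simp only [cycleGraph.val_threeColoring]; split_ifs <;> omega)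
  simp [Fin.ext_iff] at h02

lemma gDiam_boxProd_cycleGraph_le (m n : ℕ) :
    gDiam (cycleGraph m □ cycleGraph n) ≤ m / 2 + n / 2 :=
  gDiam_le fun x y => by
    rw [dist_boxProd cycleGraph_preconnected cycleGraph_preconnected]
    exact add_le_add (cycleGraph_dist_le_half _ _) (cycleGraph_dist_le_half _ _)

lemma exists_isIndepSet_boxProd_cycleGraph {m n : ℕ} (hm : 3 ≤ m) (hmn : m ≤ n) :
    ∃ I : Finset (Fin m × Fin n),
      (cycleGraph m □ cycleGraph n).IsIndepSet I ∧ m / 2 + n / 2 < #I := by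
  refine ⟨({x | cycleGraph.threeColoring m x.1 = cycleGraph.threeColoring n x.2} : Finset _),
    by simpa using isIndepSet_boxProd_setOf_coloring_eq _ _, ?_⟩
  have hsurj := cycleGraph.threeColoring_surjective hm
  rcases hm.eq_or_lt with rfl | hm4
  · have := card_le_card_filter_comp_eq (g := cycleGraph.threeColoring n) hsurj
    simp only [Fintype.card_fin] at this
    omega
  · have := card_lt_card_filter_comp_eq hsurj (cycleGraph.threeColoring_not_injective hm4)
      (cycleGraph.threeColoring_surjective (hm.trans hmn))
    simp only [Fintype.card_fin] at this
    omega

end SimpleGraph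

/-- For `3 ≤ m ≤ n`, the toroidal grid is never diametrical:
`diam(C_m □ C_n) < Γ_b(C_m □ C_n)`. -/
theorem torus_not_diametrical (m n : ℕ) (hm : 3 ≤ m) (hmn : m ≤ n) :
    gDiam (cycleGraph m □ cycleGraph n) < upperBroadcast (cycleGraph m □ cycleGraph n) := by
  obtain ⟨I, hI, hcard⟩ := exists_isIndepSet_boxProd_cycleGraph hm hmn
  have : NeZero m := ⟨by omega⟩
  have : NeZero n := ⟨by omega⟩
  have : Nontrivial (Fin m) := Fin.nontrivial_iff_two_le.2 (by omega)
  have hconn : (cycleGraph m □ cycleGraph n).Connected :=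
    ⟨cycleGraph_preconnected.boxProd cycleGraph_preconnected⟩
  exact (gDiam_boxProd_cycleGraph_le m n).trans_lt
    (hcard.trans_le (IsIndepSet.card_le_upperBroadcast hconn hI))
end
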